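/- Every fully shaded mesh pattern (a mesh pattern p of length n whose set of shaded boxes is all of {0,...,n}×{0,...,n}) occurs in no mesh pattern other than itself; consequently the mesh pattern poset has infinitely many maximal elements, namely exactly the fully shaded mesh patterns. -/

import Mathlib

/-!
# The poset of mesh patterns

A mesh pattern is a permutation of `{1, ..., len}` together with a set of shaded
boxes in the `(len+1) × (len+1)` grid (boxes are indexed by their south-west corner,
so boxes have coordinates in `{0, ..., len} × {0, ..., len}`).

We normalise the permutation as a function `ℕ → ℕ` (using 1-based indexing) which is
`0` outside of `[1, len]`; this makes equality of mesh patterns coincide with equality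
of the underlying data.
-/

structure MeshPattern where
  len : ℕ
  perm : ℕ → ℕ
  sh : Finset (ℕ × ℕ)
  perm_mem : ∀ i, 1 ≤ i → i ≤ len → 1 ≤ perm i ∧ perm i ≤ len
  perm_zero : ∀ i, i = 0 ∨ len < i → perm i = 0
  perm_inj : ∀ i j, 1 ≤ i → i ≤ len → 1 ≤ j → j ≤ len → perm i = perm j → i = j
  perm_surj : ∀ v, 1 ≤ v → v ≤ len → ∃ i, 1 ≤ i ∧ i ≤ len ∧ perm i = v
  sh_mem : ∀ q ∈ sh, q.1 ≤ len ∧ q.2 ≤ len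

namespace MeshPattern

/-- The (1-based) position of the value `v` in the underlying permutation of `m`. -/
noncomputable def pos (m : MeshPattern) (v : ℕ) : ℕ := Function.invFun m.perm v

/-- The dimension of a mesh pattern: length of the permutation plus number of shaded boxes. -/
def dim (m : MeshPattern) : ℕ := m.len + m.sh.card

/-- Given (the position map of an occurrence) `η` of `m` in `p`, the extended column
boundary map: pattern column boundary `i` (for `0 ≤ i ≤ m.len + 1`) is sent to the
corresponding column boundary in `p`.  Boxes of `p` with first coordinate `a` satisfying
`colExt m p η i ≤ a < colExt m p η (i+1)` are exactly the boxes lying horizontally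
within the region corresponding to pattern boxes with first coordinate `i`. -/
def colExt (m p : MeshPattern) (η : ℕ → ℕ) (i : ℕ) : ℕ :=
  if i = 0 then 0 else if i ≤ m.len then η i else p.len + 1

/-- The analogous extended row (value) boundary map. -/
noncomputable def valExt (m p : MeshPattern) (η : ℕ → ℕ) (j : ℕ) : ℕ :=
  if j = 0 then 0 else if j ≤ m.len then p.perm (η (m.pos j)) else p.len + 1

/-- The box `(a, b)` of `p` lies in the region `R_η(i, j)` of the box `(i, j)` of `m`. -/
def inRegion (m p : MeshPattern) (η : ℕ → ℕ) (i j a b : ℕ) : Prop :=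
  colExt m p η i ≤ a ∧ a < colExt m p η (i + 1) ∧
    valExt m p η j ≤ b ∧ b < valExt m p η (j + 1)

/-- The point of `p` at position `y` lies in the open interior of the region `R_η(i, j)`. -/
def interiorPt (m p : MeshPattern) (η : ℕ → ℕ) (i j y : ℕ) : Prop :=
  colExt m p η i < y ∧ y < colExt m p η (i + 1) ∧
    valExt m p η j < p.perm y ∧ p.perm y < valExt m p η (j + 1)

/-- `η` is an occurrence of the mesh pattern `m` in the mesh pattern `p`:
a (normalised) strictly increasing choice of positions realising the underlying
classical pattern, such that for every shaded box of `m` the corresponding region of `p`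
contains no point of `p` in its interior and consists entirely of shaded boxes of `p`. -/
structure IsOcc (m p : MeshPattern) (η : ℕ → ℕ) : Prop where
  zero : ∀ i, i = 0 ∨ m.len < i → η i = 0
  mem : ∀ i, 1 ≤ i → i ≤ m.len → 1 ≤ η i ∧ η i ≤ p.len
  mono : ∀ i j, 1 ≤ i → i < j → j ≤ m.len → η i < η j
  pattern : ∀ i j, 1 ≤ i → i ≤ m.len → 1 ≤ j → j ≤ m.len →
    (m.perm i < m.perm j ↔ p.perm (η i) < p.perm (η j))
  no_point : ∀ q ∈ m.sh, ∀ y, 1 ≤ y → y ≤ p.len → ¬ interiorPt m p η q.1 q.2 y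
  shaded : ∀ q ∈ m.sh, ∀ a b, inRegion m p η q.1 q.2 a b → (a, b) ∈ p.sh

/-- The mesh pattern poset: `m ≤ p` iff there is an occurrence of `m` in `p`. -/
instance : LE MeshPattern := ⟨fun m p => ∃ η, IsOcc m p η⟩

instance : LT MeshPattern := ⟨fun m p => m ≤ p ∧ m ≠ p⟩

/-- `b` covers `a` in the mesh pattern poset. -/
def CovByM (a b : MeshPattern) : Prop := a < b ∧ ¬ ∃ z, a < z ∧ z < b

open Classical in
/-- The Möbius function of a (locally finite) partial order `r`, computed with a fuel
parameter: `muFuel r n a b` is the Möbius function `μ(a, b)` provided `n` is at least the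
length of the longest chain from `a` to `b` (with the convention `μ(a, b) = 0` if
`¬ r a b`). -/
noncomputable def muFuel {α : Type*} (r : α → α → Prop) : ℕ → α → α → ℤ
  | 0, a, b => if a = b then 1 else 0
  | n + 1, a, b =>
      if a = b then 1
      else if r a b then - ∑ᶠ c ∈ {c | r a c ∧ r c b ∧ c ≠ b}, muFuel r n a c
      else 0

/-- The Möbius function of the mesh pattern poset.  Since every chain from `m` to `p` has
length at most `dim p`, the fuel `dim p + 1` is sufficient, so this is the genuine Möbius
function: `mu m m = 1`, `mu m p = -∑_{m ≤ c < p} mu m c` for `m < p`, and `mu m p = 0`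
when `m ≰ p`. -/
noncomputable def mu (m p : MeshPattern) : ℤ := muFuel (· ≤ ·) (p.dim + 1) m p

/-- The classical permutation poset `𝓟`, realised as the subposet of unshaded mesh
patterns (for unshaded patterns, mesh occurrence is exactly classical pattern
containment).  Its Möbius function. -/
noncomputable def muP (σ π : {m : MeshPattern // m.sh = ∅}) : ℤ :=
  muFuel (· ≤ ·) (π.1.len + 1) σ π

/-- The mesh pattern with underlying identity permutation of length `n`
and shaded boxes `s`. -/
def ofId (n : ℕ) (s : Finset (ℕ × ℕ)) (hs : ∀ q ∈ s, q.1 ≤ n ∧ q.2 ≤ n) : MeshPattern where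
  len := n
  perm := fun i => if 1 ≤ i ∧ i ≤ n then i else 0
  sh := s
  perm_mem := by intro i h1 h2; rw [if_pos ⟨h1, h2⟩]; omega
  perm_zero := by intro i h; rw [if_neg]; omega
  perm_inj := by intro i j h1 h2 h3 h4 h; rw [if_pos ⟨h1, h2⟩, if_pos ⟨h3, h4⟩] at h; omega
  perm_surj := by
    intro v h1 h2; exact ⟨v, h1, h2, by rw [if_pos ⟨h1, h2⟩]⟩
  sh_mem := hs

/-- The mesh pattern with underlying decreasing permutation of length `n`
and shaded boxes `s`. -/
def ofRev (n : ℕ) (s : Finset (ℕ × ℕ)) (hs : ∀ q ∈ s, q.1 ≤ n ∧ q.2 ≤ n) : MeshPattern where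
  len := n
  perm := fun i => if 1 ≤ i ∧ i ≤ n then n + 1 - i else 0
  sh := s
  perm_mem := by intro i h1 h2; rw [if_pos ⟨h1, h2⟩]; omega
  perm_zero := by intro i h; rw [if_neg]; omega
  perm_inj := by intro i j h1 h2 h3 h4 h; rw [if_pos ⟨h1, h2⟩, if_pos ⟨h3, h4⟩] at h; omega
  perm_surj := by
    intro v h1 h2
    exact ⟨n + 1 - v, by omega, by omega, by rw [if_pos ⟨by omega, by omega⟩]; omega⟩
  sh_mem := hs

/-- The unshaded singleton mesh pattern `1^∅`. -/
def one0 : MeshPattern := ofId 1 ∅ (by simp)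

/-- The empty mesh pattern `ε^∅`. -/
def eps0 : MeshPattern := ofId 0 ∅ (by simp)

/-- The empty mesh pattern `ε^{(0,0)}` with its single box shaded. -/
def eps00 : MeshPattern := ofId 0 {(0, 0)} (by decide)

/-- The singleton mesh patterns `1^{(a,b)}` for `a b ∈ {0,1}`. -/
def one00 : MeshPattern := ofId 1 {(0, 0)} (by decide)
def one10 : MeshPattern := ofId 1 {(1, 0)} (by decide)
def one01 : MeshPattern := ofId 1 {(0, 1)} (by decide)
def one11 : MeshPattern := ofId 1 {(1, 1)} (by decide)

/-- The mesh pattern `21^{(0,0),(1,0)}`. -/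
def pat21 : MeshPattern := ofRev 2 {(0, 0), (1, 0)} (by decide)

/-- Replace the shading of `p` by a subset `A ⊆ sh p` (same underlying permutation):
this is the mesh pattern `(cl p)^A`. -/
def reshade (p : MeshPattern) (A : Finset (ℕ × ℕ)) (hA : A ⊆ p.sh) : MeshPattern :=
  { p with sh := A, sh_mem := fun q hq => p.sh_mem q (hA hq) }

/-- The occurrence `η` of `s` in `p` uses the shaded box `(a, b) ∈ sh p`. -/
def UsesBox (s p : MeshPattern) (η : ℕ → ℕ) (a b : ℕ) : Prop :=
  (a, b) ∈ p.sh ∧ ∃ i j, (i, j) ∈ s.sh ∧ inRegion s p η i j a b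

/-- The position map of the occurrence of `p − x` in `p` avoiding the point at
position `x`. -/
def etaDel (p : MeshPattern) (x : ℕ) : ℕ → ℕ := fun i =>
  if 1 ≤ i ∧ i ≤ p.len - 1 then (if i < x then i else i + 1) else 0

/-- The underlying permutation of the pattern obtained from `p` by deleting the point at
position `x`. -/
def delPerm (p : MeshPattern) (x : ℕ) : ℕ → ℕ := fun i =>
  if 1 ≤ i ∧ i ≤ p.len - 1 then
    (if p.perm (etaDel p x i) < p.perm x then p.perm (etaDel p x i)
     else p.perm (etaDel p x i) - 1)
  else 0

/-- `q` is the mesh pattern `p − x` obtained from `p` by deleting the point at position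
`x` (where `1 ≤ x ≤ len p`): the underlying permutation is obtained by deleting that
letter, and a box of `q` is shaded exactly when the corresponding region of `p` (under
the occurrence `etaDel p x`) is entirely shaded and contains no point of `p` in its
interior.  In particular `etaDel p x` is an occurrence of `q` in `p`. -/
def IsDeletion (p : MeshPattern) (x : ℕ) (q : MeshPattern) : Prop :=
  1 ≤ x ∧ x ≤ p.len ∧ q.len + 1 = p.len ∧ q.perm = delPerm p x ∧
    ∀ i j : ℕ, ((i, j) ∈ q.sh ↔ i ≤ q.len ∧ j ≤ q.len ∧
      (∀ a b, inRegion q p (etaDel p x) i j a b → (a, b) ∈ p.sh) ∧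
      ∀ y, 1 ≤ y → y ≤ p.len → ¬ interiorPt q p (etaDel p x) i j y)

/-- Deleting the point at position `x` of `p` (with `q = p − x`) merges shadings:
some shaded box of `q` corresponds to more than one shaded box of `p`. -/
def MergesShadings (p : MeshPattern) (x : ℕ) (q : MeshPattern) : Prop :=
  ∃ i j, (i, j) ∈ q.sh ∧ ∃ a b a' b', (a, b) ≠ (a', b') ∧ (a, b) ∈ p.sh ∧
    (a', b') ∈ p.sh ∧ inRegion q p (etaDel p x) i j a b ∧
    inRegion q p (etaDel p x) i j a' b'

/-- `f 0 ⋖ f 1 ⋖ ⋯ ⋖ f k` is a maximal chain of length `k` from `a` to `b`. -/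
def IsMaxChain (a b : MeshPattern) (k : ℕ) (f : ℕ → MeshPattern) : Prop :=
  f 0 = a ∧ f k = b ∧ ∀ i < k, CovByM (f i) (f (i + 1))

/-- Underlying permutation of the direct sum `s ⊕ t`. -/
def dsumPerm (s t : MeshPattern) : ℕ → ℕ := fun i =>
  if i ≤ s.len then s.perm i
  else if i ≤ s.len + t.len then t.perm (i - s.len) + s.len
  else 0

/-- Shading of the direct sum `s ⊕ t`: the shadings of `s` and of `t` (translated), where
boxes on the shared boundary are extended to the new boundary (north/east for boxes of
`s`, south/west for boxes of `t`). -/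
def dsumSh (s t : MeshPattern) : Finset (ℕ × ℕ) :=
  s.sh ∪ t.sh.image (fun q => (q.1 + s.len, q.2 + s.len)) ∪
    (s.sh.filter (fun q => q.2 = s.len)).biUnion
      (fun q => (Finset.range (t.len + 1)).image (fun k => (q.1, s.len + k))) ∪
    (s.sh.filter (fun q => q.1 = s.len)).biUnion
      (fun q => (Finset.range (t.len + 1)).image (fun k => (s.len + k, q.2))) ∪
    (t.sh.filter (fun q => q.2 = 0)).biUnion
      (fun q => (Finset.range (s.len + 1)).image (fun k => (q.1 + s.len, k))) ∪
    (t.sh.filter (fun q => q.1 = 0)).biUnion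
      (fun q => (Finset.range (s.len + 1)).image (fun k => (k, q.2 + s.len)))

/-- `r = s ⊕ t` is the direct sum of the mesh patterns `s` and `t` (defined when the top
right corner box of `s` and the bottom left corner box of `t` are not shaded). -/
def IsDSum (s t r : MeshPattern) : Prop :=
  (s.len, s.len) ∉ s.sh ∧ (0, 0) ∉ t.sh ∧
    r.len = s.len + t.len ∧ r.perm = dsumPerm s t ∧ r.sh = dsumSh s t

/-- A mesh pattern is indecomposable if it cannot be written as a direct sum `a ⊕ b`
with neither `a` nor `b` equal to it. -/
def Indecomposable (m : MeshPattern) : Prop :=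
  ¬ ∃ s t, s ≠ m ∧ t ≠ m ∧ IsDSum s t m

/-- `SumOfList L m`: `m` is the direct sum of the list `L` of mesh patterns
(the empty list summing to the empty pattern `ε^∅`). -/
def SumOfList : List MeshPattern → MeshPattern → Prop
  | [], m => m.len = 0 ∧ m.sh = ∅
  | [a], m => a = m
  | a :: b :: rest, m => ∃ r, SumOfList (b :: rest) r ∧ IsDSum a r m

/-- Underlying permutation of the skew sum `s ⊖ t`. -/
def sksumPerm (s t : MeshPattern) : ℕ → ℕ := fun i =>
  if i = 0 then 0
  else if i ≤ s.len then s.perm i + t.len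
  else if i ≤ s.len + t.len then t.perm (i - s.len)
  else 0

/-- Shading of the skew sum `s ⊖ t` (s placed to the north west of `t`), with boxes on
the shared boundary extended to the new boundary. -/
def sksumSh (s t : MeshPattern) : Finset (ℕ × ℕ) :=
  s.sh.image (fun q => (q.1, q.2 + t.len)) ∪ t.sh.image (fun q => (q.1 + s.len, q.2)) ∪
    (s.sh.filter (fun q => q.1 = s.len)).biUnion
      (fun q => (Finset.range (t.len + 1)).image (fun k => (s.len + k, q.2 + t.len))) ∪
    (s.sh.filter (fun q => q.2 = 0)).biUnion
      (fun q => (Finset.range (t.len + 1)).image (fun k => (q.1, k))) ∪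
    (t.sh.filter (fun q => q.2 = t.len)).biUnion
      (fun q => (Finset.range (s.len + 1)).image (fun k => (q.1 + s.len, t.len + k))) ∪
    (t.sh.filter (fun q => q.1 = 0)).biUnion
      (fun q => (Finset.range (s.len + 1)).image (fun k => (k, q.2)))

/-- `r = s ⊖ t` is the skew sum of the mesh patterns `s` and `t` (defined when the bottom
right corner box of `s` and the top left corner box of `t` are not shaded). -/
def IsSkewSum (s t r : MeshPattern) : Prop :=
  (s.len, 0) ∉ s.sh ∧ (0, t.len) ∉ t.sh ∧
    r.len = s.len + t.len ∧ r.perm = sksumPerm s t ∧ r.sh = sksumSh s t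

/-- A mesh pattern is skew-indecomposable if it cannot be written as a skew sum `a ⊖ b`
with neither `a` nor `b` equal to it. -/
def SkewIndecomposable (m : MeshPattern) : Prop :=
  ¬ ∃ s t, s ≠ m ∧ t ≠ m ∧ IsSkewSum s t m

/-- Connectivity (zig-zag of comparabilities) inside a subset `I` of the mesh pattern
poset. -/
def ConnIn (I : Set MeshPattern) (a b : MeshPattern) : Prop :=
  Relation.ReflTransGen (fun u v => u ∈ I ∧ v ∈ I ∧ (u ≤ v ∨ v ≤ u)) a b

/-- The interval `[m, p]` is strongly disconnected: its open interior has at least two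
connected components each containing more than one element. -/
def StronglyDisconnectedInterval (m p : MeshPattern) : Prop :=
  ∃ a b, (m < a ∧ a < p) ∧ (m < b ∧ b < p) ∧ ¬ ConnIn {c | m < c ∧ c < p} a b ∧
    (∃ a', (m < a' ∧ a' < p) ∧ a' ≠ a ∧ ConnIn {c | m < c ∧ c < p} a a') ∧
    (∃ b', (m < b' ∧ b' < p) ∧ b' ≠ b ∧ ConnIn {c | m < c ∧ c < p} b b')

/-- The occurrence of `m` in `m ⊕ m` (or `m ⊖ m`) as the first `|m|` points. -/
def eta1 (m : MeshPattern) : ℕ → ℕ := fun i => if 1 ≤ i ∧ i ≤ m.len then i else 0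

/-- The occurrence of `m` in `m ⊕ m` (or `m ⊖ m`) as the last `|m|` points. -/
def eta2 (m : MeshPattern) : ℕ → ℕ := fun i => if 1 ≤ i ∧ i ≤ m.len then i + m.len else 0

/-- `i` (with `2 ≤ i ≤ len`) is the position of an adjacency tail: the letter at
position `i` differs by one from the letter at position `i - 1`. -/
def IsAdjTail (m : MeshPattern) (i : ℕ) : Prop :=
  2 ≤ i ∧ i ≤ m.len ∧ (m.perm i = m.perm (i - 1) + 1 ∨ m.perm (i - 1) = m.perm i + 1)

open Classical in
/-- `adj(cl m)`: the number of adjacency tails of the underlying permutation of `m`. -/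
noncomputable def adjCount (m : MeshPattern) : ℕ :=
  ((Finset.range (m.len + 1)).filter (fun i => IsAdjTail m i)).card

/-- The total number of mesh patterns of length `n`. -/
def Tcount (n : ℕ) : ℕ := n.factorial * 2 ^ ((n + 1) ^ 2)

end MeshPattern

/-- Binary words, partially ordered by (not necessarily contiguous) subword containment:
the poset `𝓦`. -/
structure Word where
  toList : List Bool

instance : LE Word := ⟨fun u w => u.toList.Sublist w.toList⟩

/-- The binary word associated to a mesh pattern `m` in the class `Γ`: it has length
`|m| - 1`, and for each letter `i` with `2 ≤ i ≤ |m|` the corresponding entry is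
`false` (i.e. `0`) if the letter `i` appears before the letter `1` in `cl m`,
and `true` (i.e. `1`) otherwise. -/
noncomputable def MeshPattern.wordOf (m : MeshPattern) : List Bool :=
  (List.range (m.len - 1)).map (fun k => if m.pos (k + 2) < m.pos 1 then false else true)

namespace MeshPattern

/-- A mesh pattern is fully shaded if every box of its grid is shaded. -/
def FullyShaded (p : MeshPattern) : Prop :=
  p.sh = Finset.range (p.len + 1) ×ˢ Finset.range (p.len + 1)

end MeshPattern

/-!
Let `η` be an occurrence of a fully shaded `p` in `q`. The regions `R_η(i, j)` tile the grid
of `q`, and none of them has a point of `q` in its interior. A point of `q` missed by `η`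
differs in column and in value from every region boundary, so it would lie in such an
interior; hence `η` is onto, so it is the identity. Then `q` has the permutation of `p`, every
region is a single box, and `sh q = sh p`. Every pattern lies below its full shading, so the
maximal elements are exactly the fully shaded patterns.
-/

theorem Nat.exists_lt_lt_succ_of_forall_ne (f : ℕ → ℕ) {n y : ℕ} (h0 : f 0 < y)
    (htop : y < f (n + 1)) (hne : ∀ i, 1 ≤ i → i ≤ n → f i ≠ y) :
    ∃ i ≤ n, f i < y ∧ y < f (i + 1) := by
  induction n with
  | zero => exact ⟨0, le_rfl, h0, htop⟩
  | succ n ih =>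
    by_cases hy : y < f (n + 1)
    · obtain ⟨i, hi, h⟩ := ih hy fun i h1 h2 => hne i h1 (by omega)
      exact ⟨i, by omega, h⟩
    · have := hne (n + 1) (by omega) le_rfl
      exact ⟨n + 1, le_rfl, by omega, htop⟩

theorem StrictMonoOn.eq_self_of_mapsTo_Icc {f : ℕ → ℕ} {n : ℕ}
    (hf : StrictMonoOn f (Set.Icc 1 n)) (hmaps : Set.MapsTo f (Set.Icc 1 n) (Set.Icc 1 n))
    {i : ℕ} (hi : i ∈ Set.Icc 1 n) : f i = i := by
  obtain ⟨hi1, hi2⟩ := hi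
  have growth : ∀ a d, 1 ≤ a → a + d ≤ n → f a + d ≤ f (a + d) := by
    intro a d ha had
    induction d with
    | zero => rfl
    | succ d ih =>
      have := hf ⟨by omega, by omega⟩ ⟨by omega, had⟩ (by omega : a + d < a + (d + 1))
      have := ih (by omega)
      omega
  have h1 := growth 1 (i - 1) le_rfl (by omega)
  have h2 := growth i (n - i) hi1 (by omega)
  rw [Nat.add_sub_cancel' hi1] at h1
  rw [Nat.add_sub_cancel' hi2] at h2
  have := (hmaps ⟨le_rfl, hi1.trans hi2⟩).1
  have := (hmaps ⟨hi1.trans hi2, le_rfl⟩).2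
  omega

namespace MeshPattern

theorem ext {p q : MeshPattern} (hlen : p.len = q.len) (hperm : p.perm = q.perm)
    (hsh : p.sh = q.sh) : p = q := by
  cases p; cases q; simp_all

theorem perm_pos (m : MeshPattern) {v : ℕ} (h1 : 1 ≤ v) (h2 : v ≤ m.len) :
    m.perm (m.pos v) = v :=
  have ⟨i, _, _, hi⟩ := m.perm_surj v h1 h2
  Function.invFun_eq ⟨i, hi⟩

theorem pos_mem (m : MeshPattern) {v : ℕ} (h1 : 1 ≤ v) (h2 : v ≤ m.len) :
    1 ≤ m.pos v ∧ m.pos v ≤ m.len := by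
  have := m.perm_pos h1 h2
  by_contra h
  rw [m.perm_zero _ (by omega)] at this
  omega

theorem perm_eq_card_filter (m : MeshPattern) {i : ℕ} (h1 : 1 ≤ i) (h2 : i ≤ m.len) :
    m.perm i = ((Finset.Icc 1 m.len).filter (fun j => m.perm j ≤ m.perm i)).card := by
  have hi := m.perm_mem i h1 h2
  symm
  calc ((Finset.Icc 1 m.len).filter (fun j => m.perm j ≤ m.perm i)).card
      = (Finset.Icc 1 (m.perm i)).card := by
        apply Finset.card_nbij m.perm
        · intro j hj
          simp only [Finset.coe_filter, Finset.mem_Icc, Set.mem_ofPred_eq] at hj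
          simpa using ⟨(m.perm_mem j hj.1.1 hj.1.2).1, hj.2⟩
        · intro j hj k hk hjk
          simp only [Finset.coe_filter, Finset.mem_Icc, Set.mem_ofPred_eq] at hj hk
          exact m.perm_inj j k hj.1.1 hj.1.2 hk.1.1 hk.1.2 hjk
        · intro v hv
          simp only [Finset.coe_Icc, Set.mem_Icc] at hv
          obtain ⟨j, hj1, hj2, hj⟩ := m.perm_surj v hv.1 (by omega)
          exact ⟨j, by simp [hj1, hj2, hj, hv.2], hj⟩
    _ = m.perm i := by simp

theorem perm_eq_of_lt_iff {p q : MeshPattern} (hlen : p.len = q.len)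
    (h : ∀ i j, 1 ≤ i → i ≤ p.len → 1 ≤ j → j ≤ p.len →
      (p.perm i < p.perm j ↔ q.perm i < q.perm j)) :
    p.perm = q.perm := by
  funext i
  by_cases hi : 1 ≤ i ∧ i ≤ p.len
  · rw [p.perm_eq_card_filter hi.1 hi.2, q.perm_eq_card_filter hi.1 (hlen ▸ hi.2), ← hlen]
    congr 1
    refine Finset.filter_congr fun j hj => ?_
    rw [Finset.mem_Icc] at hj
    simp only [← not_lt, h i j hi.1 hi.2 hj.1 hj.2]
  · rw [p.perm_zero i (by omega), q.perm_zero i (by omega)]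

section IdentityOccurrence

variable {m p : MeshPattern} {η : ℕ → ℕ}

theorem colExt_zero : colExt m p η 0 = 0 := rfl

theorem colExt_len_succ : colExt m p η (m.len + 1) = p.len + 1 := by simp [colExt]

theorem valExt_zero : valExt m p η 0 = 0 := rfl

theorem valExt_len_succ : valExt m p η (m.len + 1) = p.len + 1 := by simp [valExt]

theorem colExt_of_eq_self (hlen : p.len = m.len) (hη : ∀ i, 1 ≤ i → i ≤ m.len → η i = i)
    (i : ℕ) : colExt m p η i = min i (m.len + 1) := by
  unfold colExt
  split_ifs with h0 h
  · omega
  · rw [hη i (by omega) h]; omega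
  · omega

theorem valExt_of_eq_self (hlen : p.len = m.len) (hperm : p.perm = m.perm)
    (hη : ∀ i, 1 ≤ i → i ≤ m.len → η i = i) (j : ℕ) :
    valExt m p η j = min j (m.len + 1) := by
  unfold valExt
  split_ifs with h0 h
  · omega
  · have := m.pos_mem (by omega) h
    rw [hη _ this.1 this.2, hperm, m.perm_pos (by omega) h]; omega
  · omega

theorem inRegion_of_eq_self_iff (hlen : p.len = m.len) (hperm : p.perm = m.perm)
    (hη : ∀ i, 1 ≤ i → i ≤ m.len → η i = i) {i j a b : ℕ} (hi : i ≤ m.len) (hj : j ≤ m.len) :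
    inRegion m p η i j a b ↔ a = i ∧ b = j := by
  simp only [inRegion, colExt_of_eq_self hlen hη, valExt_of_eq_self hlen hperm hη]
  omega

theorem not_interiorPt_of_eq_self (hlen : p.len = m.len)
    (hη : ∀ i, 1 ≤ i → i ≤ m.len → η i = i) {i j y : ℕ} (hi : i ≤ m.len) :
    ¬ interiorPt m p η i j y := by
  simp only [interiorPt, colExt_of_eq_self hlen hη]
  omega

end IdentityOccurrence

def full (p : MeshPattern) : MeshPattern :=
  { p with
    sh := Finset.range (p.len + 1) ×ˢ Finset.range (p.len + 1)
    sh_mem := fun q hq => by simp only [Finset.mem_product, Finset.mem_range] at hq; omega }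

theorem fullyShaded_full (p : MeshPattern) : FullyShaded (full p) := rfl

theorem le_full (p : MeshPattern) : p ≤ full p := by
  have hη : ∀ i, 1 ≤ i → i ≤ p.len → eta1 p i = i := fun i h1 h2 => if_pos ⟨h1, h2⟩
  refine ⟨eta1 p, ⟨?_, ?_, ?_, ?_, ?_, ?_⟩⟩
  · intro i h
    exact if_neg (by omega)
  · intro i h1 h2
    rw [hη i h1 h2]
    exact ⟨h1, h2⟩
  · intro i j h1 h2 h3
    rw [hη i h1 (by omega), hη j (by omega) h3]
    exact h2
  · intro i j h1 h2 h3 h4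
    rw [hη i h1 h2, hη j h3 h4]
    rfl
  · intro q hq y _ _
    exact not_interiorPt_of_eq_self rfl hη (p.sh_mem q hq).1
  · intro q hq a b hab
    obtain ⟨rfl, rfl⟩ := (inRegion_of_eq_self_iff rfl rfl hη (p.sh_mem q hq).1
      (p.sh_mem q hq).2).1 hab
    have := p.sh_mem q hq
    simp only [full, Finset.mem_product, Finset.mem_range]
    omega

namespace IsOcc

variable {m p : MeshPattern} {η : ℕ → ℕ}

theorem strictMonoOn (hocc : IsOcc m p η) : StrictMonoOn η (Set.Icc 1 m.len) :=
  fun a ha b hb hab => hocc.mono a b ha.1 hab hb.2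

theorem exists_interiorPt (hocc : IsOcc m p η) {y : ℕ} (hy1 : 1 ≤ y) (hy2 : y ≤ p.len)
    (hne : ∀ i, 1 ≤ i → i ≤ m.len → η i ≠ y) :
    ∃ i ≤ m.len, ∃ j ≤ m.len, interiorPt m p η i j y := by
  obtain ⟨i, hi, hcol⟩ :=
    Nat.exists_lt_lt_succ_of_forall_ne (colExt m p η) (n := m.len) (y := y)
    (by rw [colExt_zero]; omega) (by rw [colExt_len_succ]; omega)
    fun i h1 h2 => by simpa only [colExt, if_neg (by omega : i ≠ 0), if_pos h2] using hne i h1 h2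
  have hv := p.perm_mem y hy1 hy2
  obtain ⟨j, hj, hval⟩ :=
    Nat.exists_lt_lt_succ_of_forall_ne (valExt m p η) (n := m.len) (y := p.perm y)
    (by rw [valExt_zero]; omega) (by rw [valExt_len_succ]; omega)
    fun j h1 h2 heq => by
      have hpos := m.pos_mem h1 h2
      have hmem := hocc.mem _ hpos.1 hpos.2
      rw [valExt, if_neg (by omega), if_pos h2] at heq
      exact hne _ hpos.1 hpos.2 (p.perm_inj _ _ hmem.1 hmem.2 hy1 hy2 heq)
  exact ⟨i, hi, j, hj, hcol.1, hcol.2, hval.1, hval.2⟩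

theorem exists_eq_of_fullyShaded (hm : FullyShaded m) (hocc : IsOcc m p η) {y : ℕ}
    (hy1 : 1 ≤ y) (hy2 : y ≤ p.len) : ∃ i, 1 ≤ i ∧ i ≤ m.len ∧ η i = y := by
  by_contra! hne
  obtain ⟨i, hi, j, hj, hint⟩ := hocc.exists_interiorPt hy1 hy2 hne
  have hij : (i, j) ∈ m.sh := by
    rw [hm, Finset.mem_product, Finset.mem_range, Finset.mem_range]
    omega
  exact hocc.no_point (i, j) hij y hy1 hy2 hint

theorem len_eq_of_fullyShaded (hm : FullyShaded m) (hocc : IsOcc m p η) : p.len = m.len := by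
  have hmaps : Set.MapsTo η (Finset.Icc 1 m.len) (Finset.Icc 1 p.len) := fun i hi => by
    simp only [Finset.coe_Icc, Set.mem_Icc] at hi ⊢
    exact hocc.mem i hi.1 hi.2
  have hsurj : Set.SurjOn η (Finset.Icc 1 m.len) (Finset.Icc 1 p.len) := fun y hy => by
    simp only [Finset.coe_Icc, Set.mem_Icc] at hy
    obtain ⟨i, h1, h2, hi⟩ := exists_eq_of_fullyShaded hm hocc hy.1 hy.2
    exact ⟨i, by simp [h1, h2], hi⟩
  have hle := Finset.card_le_card_of_surjOn η hsurj
  have hge := Finset.card_le_card_of_injOn η hmaps (by simpa using hocc.strictMonoOn.injOn)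
  simp only [Nat.card_Icc] at hle hge
  omega

theorem apply_eq_self_of_fullyShaded (hm : FullyShaded m) (hocc : IsOcc m p η) :
    ∀ i, 1 ≤ i → i ≤ m.len → η i = i := by
  have hlen := hocc.len_eq_of_fullyShaded hm
  intro i h1 h2
  refine hocc.strictMonoOn.eq_self_of_mapsTo_Icc (fun j hj => ?_) ⟨h1, h2⟩
  have := hocc.mem j hj.1 hj.2
  exact ⟨this.1, hlen ▸ this.2⟩

end IsOcc

theorem eq_of_fullyShaded_le {p q : MeshPattern} (hp : FullyShaded p) (h : p ≤ q) : q = p := by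
  obtain ⟨η, hocc⟩ := h
  have hlen := hocc.len_eq_of_fullyShaded hp
  have hη := hocc.apply_eq_self_of_fullyShaded hp
  have hperm : q.perm = p.perm := perm_eq_of_lt_iff hlen fun i j hi1 hi2 hj1 hj2 => by
    rw [hlen] at hi2 hj2
    rw [hocc.pattern i j hi1 hi2 hj1 hj2, hη i hi1 hi2, hη j hj1 hj2]
  refine ext hlen hperm (Finset.Subset.antisymm (fun x hx => ?_) fun x hx => ?_)
  · have := q.sh_mem x hx
    rw [hp, Finset.mem_product, Finset.mem_range, Finset.mem_range]
    omega
  · have ⟨ha, hb⟩ := p.sh_mem x hx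
    exact hocc.shaded x hx x.1 x.2 ((inRegion_of_eq_self_iff hlen hperm hη ha hb).2 ⟨rfl, rfl⟩)

/-- A fully shaded mesh pattern occurs in no mesh pattern other than itself; consequently
the maximal elements of the mesh pattern poset are exactly the fully shaded mesh
patterns, and there are infinitely many of them. -/
theorem fullyShaded_occurs_only_in_self_and_maximal :
    (∀ p : MeshPattern, FullyShaded p → ∀ q, p ≤ q → q = p) ∧
    (∀ p : MeshPattern, (∀ q, p ≤ q → q = p) ↔ FullyShaded p) ∧
    {p : MeshPattern | ∀ q, p ≤ q → q = p}.Infinite := by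
  refine ⟨fun p hp q => eq_of_fullyShaded_le hp,
    fun p => ⟨fun hmax => ?_, fun hp q => eq_of_fullyShaded_le hp⟩, ?_⟩
  · exact congrArg sh (hmax (full p) (le_full p)).symm
  · refine Set.infinite_of_injective_forall_mem (f := fun n => full (ofId n ∅ (by simp)))
      (fun a b h => by simpa [full, ofId] using congrArg len h)
      fun n q => eq_of_fullyShaded_le (fullyShaded_full _)

end MeshPattern
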